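/- For every Boolean network f of dimension n, the min-trapping extension satisfies: f ⊑ f^M, (f^M)^M = f^M, and MT(f^M) = MT(f). -/

import Mathlib

/-!  Common definitions: Boolean networks on `Fin n → Bool`. -/

/-- The update `f^{(S)}` of the coordinates in `S` according to `f`. -/
def upd {n : ℕ} (f : (Fin n → Bool) → Fin n → Bool) (S : Finset (Fin n)) :
    (Fin n → Bool) → Fin n → Bool :=
  fun x i => if i ∈ S then f x i else x i

/-- `f^{(S,T)} = f^{(T)} ∘ f^{(S)}`. -/
def upd2 {n : ℕ} (f : (Fin n → Bool) → Fin n → Bool) (S T : Finset (Fin n)) :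
    (Fin n → Bool) → Fin n → Bool :=
  upd f T ∘ upd f S

/-- `Δ(x,y)`, the set of coordinates where `x` and `y` differ. -/
def delta {n : ℕ} (x y : Fin n → Bool) : Set (Fin n) := {i | x i ≠ y i}

/-- Hamming distance. -/
noncomputable def hdist {n : ℕ} (x y : Fin n → Bool) : ℕ := (delta x y).ncard

/-- The interval (subcube) `[x,y]`. -/
def interval {n : ℕ} (x y : Fin n → Bool) : Set (Fin n → Bool) :=
  {z | delta x z ⊆ delta x y}

/-- A subcube of `𝔹^n`: fix the coordinates in `S` to `0` and those in `T` to `1`. -/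
def IsSubcube {n : ℕ} (X : Set (Fin n → Bool)) : Prop :=
  ∃ S T : Set (Fin n), Disjoint S T ∧
    X = {x | (∀ i ∈ S, x i = false) ∧ (∀ i ∈ T, x i = true)}

/-- The partial order `f ⊑ g` on Boolean networks. -/
def BNle {n : ℕ} (f g : (Fin n → Bool) → Fin n → Bool) : Prop :=
  ∀ x, delta x (f x) ⊆ delta x (g x)

/-- A trapspace of `f`: an invariant subcube. -/
def IsTrapspace {n : ℕ} (f : (Fin n → Bool) → Fin n → Bool)
    (X : Set (Fin n → Bool)) : Prop :=
  IsSubcube X ∧ ∀ x ∈ X, f x ∈ X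

/-- The collection of all trapspaces of `f`. -/
def trapspaces {n : ℕ} (f : (Fin n → Bool) → Fin n → Bool) :
    Set (Set (Fin n → Bool)) :=
  {X | IsTrapspace f X}

/-- The principal trapspace `T_f(x)`: the smallest trapspace of `f` containing `x`. -/
def Tprin {n : ℕ} (f : (Fin n → Bool) → Fin n → Bool) (x : Fin n → Bool) :
    Set (Fin n → Bool) :=
  ⋂₀ {X | IsTrapspace f X ∧ x ∈ X}

/-- The collection of principal trapspaces of `f`. -/
def PT {n : ℕ} (f : (Fin n → Bool) → Fin n → Bool) : Set (Set (Fin n → Bool)) :=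
  {X | ∃ x, X = Tprin f x}

-- The opposite of `x` in a subcube `X` containing `x`: the coordinate `i` is flipped
-- iff some element of `X` differs from `x` there; so `[x, opp X x] = X` when `X` is a
-- subcube containing `x`.
open scoped Classical in
noncomputable def opp {n : ℕ} (X : Set (Fin n → Bool)) (x : Fin n → Bool) :
    Fin n → Bool :=
  fun i => if ∃ y ∈ X, y i ≠ x i then !(x i) else x i

/-- The trapping closure `f^T`, characterised by `[x, f^T(x)] = T_f(x)`. -/
noncomputable def trapClosure {n : ℕ} (f : (Fin n → Bool) → Fin n → Bool) :
    (Fin n → Bool) → Fin n → Bool :=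
  fun x => opp (Tprin f x) x

/-- The general asynchronous graph of `f`, as a relation on `𝔹^n`. -/
def GA {n : ℕ} (f : (Fin n → Bool) → Fin n → Bool) :
    (Fin n → Bool) → (Fin n → Bool) → Prop :=
  fun x y => ∃ S : Finset (Fin n), y = upd f S x

/-- The asynchronous graph of `f`, as a relation on `𝔹^n`. -/
def Agraph {n : ℕ} (f : (Fin n → Bool) → Fin n → Bool) :
    (Fin n → Bool) → (Fin n → Bool) → Prop :=
  fun x y => ∃ i : Fin n, y = upd f {i} x

/-- The trapping graph of `f`: an edge `(x,y)` iff `y ∈ T_f(x)`. -/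
def TG {n : ℕ} (f : (Fin n → Bool) → Fin n → Bool) :
    (Fin n → Bool) → (Fin n → Bool) → Prop :=
  fun x y => y ∈ Tprin f x

/-- A network is trapping if its general asynchronous graph is transitive. -/
def IsTrapping {n : ℕ} (f : (Fin n → Bool) → Fin n → Bool) : Prop :=
  Transitive (GA f)

/-- A commutative Boolean network: `f^{(i,j)} = f^{(j,i)}` for all `i,j`. -/
def IsCommutative' {n : ℕ} (f : (Fin n → Bool) → Fin n → Bool) : Prop :=
  ∀ i j : Fin n, upd2 f {i} {j} = upd2 f {j} {i}

/-- `𝒜(x)`: the intersection of all members of `𝒜` containing `x`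
(`= 𝔹^n` if no member contains `x`, since `⋂₀ ∅ = univ`). -/
def collAt {n : ℕ} (𝒜 : Set (Set (Fin n → Bool))) (x : Fin n → Bool) :
    Set (Fin n → Bool) :=
  ⋂₀ {A ∈ 𝒜 | x ∈ A}

/-- The network `F(𝒜)`, characterised by `[x, F(𝒜)(x)] = 𝒜(x)`. -/
noncomputable def Fnet {n : ℕ} (𝒜 : Set (Set (Fin n → Bool))) :
    (Fin n → Bool) → Fin n → Bool :=
  fun x => opp (collAt 𝒜 x) x

/-- A collection of subcubes is pre-principal if `𝒬 = {𝒬(x) : x ∈ 𝔹^n}`. -/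
def PrePrincipal {n : ℕ} (𝒬 : Set (Set (Fin n → Bool))) : Prop :=
  𝒬 = {X | ∃ x, X = collAt 𝒬 x}

/-- `λ(𝒜)`: unions of subcollections of `𝒜` that are subcubes. -/
def lamColl {n : ℕ} (𝒜 : Set (Set (Fin n → Bool))) : Set (Set (Fin n → Bool)) :=
  {X | ∃ ℛ ⊆ 𝒜, X = ⋃₀ ℛ ∧ IsSubcube X}

/-- `μ(𝒜) = {𝒜(x) : x ∈ 𝔹^n}`. -/
def muColl {n : ℕ} (𝒜 : Set (Set (Fin n → Bool))) : Set (Set (Fin n → Bool)) :=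
  {X | ∃ x, X = collAt 𝒜 x}

/-- A pre-ideal collection of subcubes. -/
def PreIdeal {n : ℕ} (𝒥 : Set (Set (Fin n → Bool))) : Prop :=
  Set.univ ∈ 𝒥 ∧
  (∀ A ∈ 𝒥, ∀ B ∈ 𝒥, (A ∩ B).Nonempty → A ∩ B ∈ 𝒥) ∧
  (∀ ℛ ⊆ 𝒥, IsSubcube (⋃₀ ℛ) → ⋃₀ ℛ ∈ 𝒥)

/-- The collection of minimal trapspaces of `f`. -/
def MT {n : ℕ} (f : (Fin n → Bool) → Fin n → Bool) : Set (Set (Fin n → Bool)) :=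
  {X | IsTrapspace f X ∧ ∀ Y, IsTrapspace f Y → ¬ Y ⊂ X}

/-- `M(f)`: the union of the minimal trapspaces of `f`. -/
def Mset {n : ℕ} (f : (Fin n → Bool) → Fin n → Bool) : Set (Fin n → Bool) :=
  ⋃₀ MT f

-- The min-trapping extension `f^M`: `[x, f^M(x)] = T_f(x)` if `x ∈ M(f)`,
-- and `f^M(x) = ¬x` otherwise.
open scoped Classical in
noncomputable def minExt {n : ℕ} (f : (Fin n → Bool) → Fin n → Bool) :
    (Fin n → Bool) → Fin n → Bool :=
  fun x => if x ∈ Mset f then opp (Tprin f x) x else fun i => !(x i)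

/-!
A subcube `X` is the interval `[x, opp X x]` from each of its points `x`, so `f^M` sends a point
of a minimal trapspace `X` of `f` to the far corner of `X`, and every other point to its negation.
Hence each minimal trapspace of `f` traps `f^M`, while a proper trapspace `Y` of `f^M` lies in
`M(f)` and contains `T_f(y)` for each `y ∈ Y`; minimality on either side then gives
`MT(f^M) = MT(f)`. As `f^M` depends on `f` only through `MT(f)`, it is idempotent, and
`f ⊑ f^M` because `f(x) ∈ T_f(x)`.
-/

variable {n : ℕ}

section Subcube

lemma mem_delta_opp {X : Set (Fin n → Bool)} {x : Fin n → Bool} {i : Fin n} :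
    i ∈ delta x (opp X x) ↔ ∃ y ∈ X, y i ≠ x i := by
  by_cases h : ∃ y ∈ X, y i ≠ x i <;> simp [delta, opp, h]

lemma interval_neg_eq_univ (x : Fin n → Bool) : interval x (fun i => !x i) = Set.univ := by
  ext z
  simp [interval, delta]

lemma isSubcube_setOf_delta_subset (x : Fin n → Bool) (D : Set (Fin n)) :
    IsSubcube {z | delta x z ⊆ D} := by
  refine ⟨{i | i ∉ D ∧ x i = false}, {i | i ∉ D ∧ x i = true}, ?_, ?_⟩
  · rw [Set.disjoint_left]
    rintro i ⟨-, h₀⟩ ⟨-, h₁⟩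
    simp [h₀] at h₁
  · ext z
    constructor
    · intro h
      refine ⟨fun i ⟨hiD, hxi⟩ => ?_, fun i ⟨hiD, hxi⟩ => ?_⟩ <;>
      · by_contra hz
        exact hiD (h (by simp_all [delta]))
    · rintro ⟨h₀, h₁⟩ i hi
      by_contra hiD
      cases hxi : x i
      · exact hi (by rw [hxi, h₀ i ⟨hiD, hxi⟩])
      · exact hi (by rw [hxi, h₁ i ⟨hiD, hxi⟩])

lemma isSubcube_univ : IsSubcube (Set.univ : Set (Fin n → Bool)) :=
  ⟨∅, ∅, by simp, by ext; simp⟩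

namespace IsSubcube

variable {X : Set (Fin n → Bool)}

lemma nonempty (hX : IsSubcube X) : X.Nonempty := by
  classical
  obtain ⟨S, T, hST, rfl⟩ := hX
  refine ⟨fun i => decide (i ∈ T), fun i hi => ?_, fun i hi => ?_⟩
  · simp [Set.disjoint_left.mp hST hi]
  · simp [hi]

lemma interval_opp (hX : IsSubcube X) {x : Fin n → Bool} (hx : x ∈ X) :
    interval x (opp X x) = X := by
  obtain ⟨S, T, -, hX⟩ := hX
  ext z
  simp only [interval, Set.mem_ofPred_eq, Set.subset_def, mem_delta_opp]
  refine ⟨fun hz => ?_, fun hz i hi => ⟨z, hz, Ne.symm hi⟩⟩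
  -- a coordinate fixed on the subcube cannot be one where `z` differs from `x`
  have agree : ∀ i, (∀ y ∈ X, y i = x i) → z i = x i := fun i hi => by
    by_contra hzi
    obtain ⟨y, hy, hyi⟩ := hz i (Ne.symm hzi)
    exact hyi (hi y hy)
  rw [hX] at hx agree ⊢
  refine ⟨fun i hiS => ?_, fun i hiT => ?_⟩
  · rw [agree i fun y hy => by rw [hy.1 i hiS, hx.1 i hiS]]; exact hx.1 i hiS
  · rw [agree i fun y hy => by rw [hy.2 i hiT, hx.2 i hiT]]; exact hx.2 i hiT

lemma opp_mem (hX : IsSubcube X) {x : Fin n → Bool} (hx : x ∈ X) : opp X x ∈ X := by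
  have h : opp X x ∈ interval x (opp X x) := fun _ hi => hi
  rwa [hX.interval_opp hx] at h

lemma interval_subset (hX : IsSubcube X) {y w : Fin n → Bool} (hy : y ∈ X) (hw : w ∈ X) :
    interval y w ⊆ X := by
  rw [← hX.interval_opp hy] at hw
  calc interval y w ⊆ interval y (opp X y) := fun z hz => Set.Subset.trans hz hw
    _ = X := hX.interval_opp hy

lemma eq_univ_of_neg_mem (hX : IsSubcube X) {y : Fin n → Bool} (hy : y ∈ X)
    (hny : (fun i => !y i) ∈ X) : X = Set.univ :=
  Set.eq_univ_of_univ_subset (interval_neg_eq_univ y ▸ hX.interval_subset hy hny)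

end IsSubcube

lemma isSubcube_sInter {𝒞 : Set (Set (Fin n → Bool))} {x : Fin n → Bool}
    (h𝒞 : ∀ C ∈ 𝒞, IsSubcube C ∧ x ∈ C) : IsSubcube (⋂₀ 𝒞) := by
  have : ⋂₀ 𝒞 = {z | delta x z ⊆ ⋂ C ∈ 𝒞, delta x (opp C x)} := by
    ext z
    simp only [Set.mem_sInter, Set.subset_iInter_iff]
    refine forall₂_congr fun C hC => ?_
    exact (Set.ext_iff.mp ((h𝒞 C hC).1.interval_opp (h𝒞 C hC).2) z).symm
  rw [this]
  exact isSubcube_setOf_delta_subset x _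

end Subcube

section Trapspace

variable {f : (Fin n → Bool) → Fin n → Bool} {X : Set (Fin n → Bool)} {x : Fin n → Bool}

lemma isTrapspace_univ : IsTrapspace f Set.univ :=
  ⟨isSubcube_univ, fun _ _ => trivial⟩

lemma mem_Tprin_self : x ∈ Tprin f x :=
  Set.mem_sInter.mpr fun _ hX => hX.2

lemma isTrapspace_Tprin : IsTrapspace f (Tprin f x) :=
  ⟨isSubcube_sInter fun _ hC => ⟨hC.1.1, hC.2⟩,
    fun _ hy => Set.mem_sInter.mpr fun X hX => hX.1.2 _ (Set.mem_sInter.mp hy X hX)⟩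

lemma Tprin_subset (hX : IsTrapspace f X) (hx : x ∈ X) : Tprin f x ⊆ X :=
  Set.sInter_subset_of_mem ⟨hX, hx⟩

lemma interval_opp_Tprin : interval x (opp (Tprin f x) x) = Tprin f x :=
  isTrapspace_Tprin.1.interval_opp mem_Tprin_self

lemma mem_MT_iff_minimal : X ∈ MT f ↔ Minimal (IsTrapspace f) X := by
  rw [minimal_iff_forall_lt, MT, Set.mem_ofPred_eq]
  exact and_congr_right' ⟨fun h Y hYX hY => h Y hY hYX, fun h Y hY hYX => h hYX hY⟩

lemma Tprin_eq_of_mem_MT (hX : X ∈ MT f) (hx : x ∈ X) : Tprin f x = X :=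
  (mem_MT_iff_minimal.mp hX).eq_of_subset isTrapspace_Tprin (Tprin_subset hX.1 hx)

lemma IsTrapspace.exists_MT_subset (hX : IsTrapspace f X) : ∃ Y ∈ MT f, Y ⊆ X := by
  obtain ⟨Y, hYX, hY⟩ := exists_minimal_le_of_wellFoundedLT _ X hX
  exact ⟨Y, mem_MT_iff_minimal.mpr hY, hYX⟩

lemma Tprin_mem_MT_of_mem_Mset (hx : x ∈ Mset f) : Tprin f x ∈ MT f := by
  obtain ⟨X, hX, hxX⟩ := hx
  rwa [Tprin_eq_of_mem_MT hX hxX]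

end Trapspace

section MinExt

variable {f : (Fin n → Bool) → Fin n → Bool} {X Y : Set (Fin n → Bool)} {x : Fin n → Bool}

lemma minExt_of_mem (hx : x ∈ Mset f) : minExt f x = opp (Tprin f x) x := by
  simp [minExt, hx]

lemma minExt_of_notMem (hx : x ∉ Mset f) : minExt f x = fun i => !x i := by
  simp [minExt, hx]

lemma le_minExt : BNle f (minExt f) := by
  intro x
  by_cases hx : x ∈ Mset f
  · rw [minExt_of_mem hx]
    change f x ∈ interval x (opp (Tprin f x) x)
    rw [interval_opp_Tprin]
    exact isTrapspace_Tprin.2 x mem_Tprin_self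
  · rw [minExt_of_notMem hx]
    intro i
    simp [delta]

lemma isTrapspace_minExt_of_mem_MT (hX : X ∈ MT f) : IsTrapspace (minExt f) X := by
  refine ⟨hX.1.1, fun y hy => ?_⟩
  rw [minExt_of_mem ⟨X, hX, hy⟩, Tprin_eq_of_mem_MT hX hy]
  exact hX.1.1.opp_mem hy

lemma IsTrapspace.Tprin_subset_of_minExt (hY : IsTrapspace (minExt f) Y) (hne : Y ≠ Set.univ)
    {y : Fin n → Bool} (hy : y ∈ Y) : y ∈ Mset f ∧ Tprin f y ⊆ Y := by
  have hyM : y ∈ Mset f := by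
    by_contra hyM
    have hny := hY.2 y hy
    rw [minExt_of_notMem hyM] at hny
    exact hne (hY.1.eq_univ_of_neg_mem hy hny)
  refine ⟨hyM, ?_⟩
  have hopp := hY.2 y hy
  rw [minExt_of_mem hyM] at hopp
  exact interval_opp_Tprin (f := f) ▸ hY.1.interval_subset hy hopp

lemma MT_minExt_subset : MT (minExt f) ⊆ MT f := by
  intro Y hY
  by_cases hne : Y = Set.univ
  · subst hne
    obtain ⟨X, hX, -⟩ := isTrapspace_univ.exists_MT_subset
    rwa [← (mem_MT_iff_minimal.mp hY).eq_of_subset (isTrapspace_minExt_of_mem_MT hX)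
      (Set.subset_univ X)]
  · obtain ⟨y, hy⟩ := hY.1.1.nonempty
    obtain ⟨hyM, hsub⟩ := hY.1.Tprin_subset_of_minExt hne hy
    have hT := Tprin_mem_MT_of_mem_Mset hyM
    rwa [← (mem_MT_iff_minimal.mp hY).eq_of_subset (isTrapspace_minExt_of_mem_MT hT) hsub]

lemma MT_subset_MT_minExt : MT f ⊆ MT (minExt f) := by
  intro X hX
  refine mem_MT_iff_minimal.mpr ⟨isTrapspace_minExt_of_mem_MT hX, fun Y hY hYX => ?_⟩
  by_cases hne : Y = Set.univ
  · exact hne ▸ Set.subset_univ X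
  obtain ⟨y, hy⟩ := hY.1.nonempty
  have hsub := (hY.Tprin_subset_of_minExt hne hy).2
  exact (mem_MT_iff_minimal.mp hX).le_of_le isTrapspace_Tprin (hsub.trans hYX) |>.trans hsub

lemma MT_minExt : MT (minExt f) = MT f :=
  MT_minExt_subset.antisymm MT_subset_MT_minExt

lemma minExt_congr {g : (Fin n → Bool) → Fin n → Bool} (h : MT g = MT f) :
    minExt g = minExt f := by
  have hM : Mset g = Mset f := by rw [Mset, Mset, h]
  funext x
  by_cases hx : x ∈ Mset f
  · obtain ⟨X, hX, hxX⟩ := hx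
    rw [minExt_of_mem (hM ▸ ⟨X, hX, hxX⟩), minExt_of_mem ⟨X, hX, hxX⟩,
      Tprin_eq_of_mem_MT hX hxX, Tprin_eq_of_mem_MT (h ▸ hX) hxX]
  · rw [minExt_of_notMem (hM ▸ hx), minExt_of_notMem hx]

end MinExt

/-- basic properties of the min-trapping extension. -/
theorem stmt8 (n : ℕ) (f : (Fin n → Bool) → Fin n → Bool) :
    BNle f (minExt f) ∧
    minExt (minExt f) = minExt f ∧
    MT (minExt f) = MT f :=
  ⟨le_minExt, minExt_congr MT_minExt, MT_minExt⟩
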